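/- Equivalence of the adapted model with C++ R-A. For every well-formed execution, under the C++ release-acquire instantiation — hb = po ∪ rf (po playing the role of sequenced-before, co playing the role of the modification order), prop = hb⁺, with the PROPAGATION axiom weakened to irreflexive(prop ; co) — the conjunction of the four axioms: SC-PER-LOCATION (acyclic(po-loc ∪ com)), NO-THIN-AIR (acyclic(hb)), OBSERVATION taken with fr (irreflexive(fr ; hb⁺)), and weakened PROPAGATION (irreflexive(hb⁺ ; co)), is equivalent to the conjunction of: the C++ R-A axioms ACYCLICITY (acyclic(hb)), CoWR (¬∃ w1 w2 r, co w1 w2 ∧ rf w1 r ∧ (w2,r) ∈ hb⁺), HBvsMO (irreflexive(hb⁺ ; co)), together with the absence of the coherence patterns coRW1 (∃ a b, po-loc a b ∧ rf b a), coRW2 (∃ a b c, po-loc a b ∧ co b c ∧ rf c a), and coRR (∃ a b c d, po-loc b c ∧ rf a b ∧ rf d c ∧ co d a). In particular, HBvsMO implies the absence of the coWW pattern (∃ a b, po-loc a b ∧ co b a), and CoWR implies the absence of the coWR pattern (∃ a b c, po-loc a b ∧ rf c b ∧ co c a). -/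

import Mathlib

/-!
Only SC-per-location needs an argument. Send every event to its source write (the write a read
reads from) and order events by `co` on their sources, a write coming before its readers. Every
`com` edge goes up in this order, and under the R-A axioms so does every `po-loc` edge between
accesses: a `po-loc` edge going down is an instance of coWW (excluded by HBvsMO), coWR (CoWR),
coRW1, coRW2 or coRR. By transitivity of `po`, a cycle of `po-loc ∪ com` would contract to a cycle
alternating between steps up this order and `po-loc` steps between accesses, which is impossible.
Conversely the coherence patterns are short cycles of `po-loc ∪ com`, and OBSERVATION is CoWR.
-/

universe u v

/-- Relational composition `r1 ; r2`. -/
def rcomp {E : Type u} (r1 r2 : E → E → Prop) : E → E → Prop :=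
  fun x z => ∃ y, r1 x y ∧ r2 y z

/-- `irreflexive r` : no event is related to itself. -/
def irreflexiveRel {E : Type u} (r : E → E → Prop) : Prop := ¬ ∃ x, r x x

/-- `acyclic r` : the transitive closure of `r` is irreflexive. -/
def acyclicRel {E : Type u} (r : E → E → Prop) : Prop :=
  irreflexiveRel (Relation.TransGen r)

/-- A well-formed execution `(E, po, rf, co)` together with its event data. -/
structure WellFormedExec (E : Type u) (Loc : Type v) where
  /-- thread of an event -/
  proc : E → ℕ
  /-- memory location of an event -/
  addr : E → Loc
  /-- set of write events -/
  W : Set E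
  /-- set of read events -/
  R : Set E
  po : E → E → Prop
  rf : E → E → Prop
  co : E → E → Prop
  WR_disjoint : Disjoint W R
  po_trans : ∀ x y z, po x y → po y z → po x z
  po_irrefl : ∀ x, ¬ po x x
  po_wf : ∀ x y, po x y → x ≠ y ∧ proc x = proc y
  po_total : ∀ x y, x ≠ y → proc x = proc y → po x y ∨ po y x
  rf_wf : ∀ w r, rf w r → w ∈ W ∧ r ∈ R ∧ addr w = addr r
  rf_exists_unique : ∀ r ∈ R, ∃! w, rf w r
  co_wf : ∀ w1 w2, co w1 w2 → w1 ∈ W ∧ w2 ∈ W ∧ w1 ≠ w2 ∧ addr w1 = addr w2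
  co_trans : ∀ x y z, co x y → co y z → co x z
  co_irrefl : ∀ x, ¬ co x x
  co_total : ∀ w1 w2, w1 ∈ W → w2 ∈ W → w1 ≠ w2 → addr w1 = addr w2 → co w1 w2 ∨ co w2 w1

namespace WellFormedExec

variable {E : Type u} {Loc : Type v} (X : WellFormedExec E Loc)

/-- program order restricted to the same location -/
def poloc : E → E → Prop := fun x y => X.po x y ∧ X.addr x = X.addr y

/-- from-read -/
def fr : E → E → Prop := fun r w1 => ∃ w0, X.rf w0 r ∧ X.co w0 w1

/-- communications -/
def com : E → E → Prop := fun x y => X.co x y ∨ X.rf x y ∨ X.fr x y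

/-- external read-from -/
def rfe : E → E → Prop := fun w r => X.rf w r ∧ X.proc w ≠ X.proc r

/-- external from-read -/
def fre : E → E → Prop := fun r w => X.fr r w ∧ X.proc r ≠ X.proc w

end WellFormedExec

section CppRA

variable {E : Type u} {Loc : Type v}

/-- C++ release-acquire happens-before: `po ∪ rf`
    (`po` playing the role of sequenced-before). -/
def cppHb (X : WellFormedExec E Loc) : E → E → Prop :=
  fun x y => X.po x y ∨ X.rf x y

/-- C++ release-acquire propagation order: `hb⁺`. -/
def cppProp (X : WellFormedExec E Loc) : E → E → Prop :=
  Relation.TransGen (cppHb X)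

namespace acyclicRel

variable {α : Type*} {r s : α → α → Prop}

theorem mono (h : acyclicRel s) (hrs : ∀ {x y}, r x y → s x y) : acyclicRel r :=
  fun ⟨x, hx⟩ => h ⟨x, Relation.TransGen.mono (fun _ _ h => hrs h) x x hx⟩

theorem not_cycle₂ (h : acyclicRel r) {a b : α} (hab : r a b) (hba : r b a) : False :=
  h ⟨a, .head hab (.single hba)⟩

theorem not_cycle₃ (h : acyclicRel r) {a b c : α} (hab : r a b) (hbc : r b c) (hca : r c a) :
    False :=
  h ⟨a, .head hab (.head hbc (.single hca))⟩

end acyclicRel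

theorem acyclicRel_of_le_strictOrder {α : Type*} {r s : α → α → Prop}
    (hrs : ∀ {x y}, r x y → s x y) (hs : ∀ {x y z}, s x y → s y z → s x z)
    (hirr : ∀ x, ¬ s x x) : acyclicRel r := by
  have : IsTrans α s := ⟨fun _ _ _ => hs⟩
  exact fun ⟨x, hx⟩ => hirr x (Relation.transGen_minimal (r := r) (fun _ _ h => hrs h) x x hx)

/-- Every cycle of `P ∪ L` lies in the transitive, irreflexive relation `P ∪ P? ; L ; P?`. -/
theorem acyclicRel_or_of_absorb {α : Type*} {P L : α → α → Prop}
    (hP : ∀ {x y z}, P x y → P y z → P x z) (hPirr : ∀ x, ¬ P x x)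
    (hL : ∀ {x y z}, L x y → L y z → L x z) (hLirr : ∀ x, ¬ L x x)
    (hLPL : ∀ {a b c d}, L a b → P b c → L c d → L a d) (hLP : ∀ {a b}, L a b → ¬ P b a) :
    acyclicRel (fun x y => P x y ∨ L x y) := by
  have hPP : ∀ {x y z}, Relation.ReflGen P x y → Relation.ReflGen P y z →
      Relation.ReflGen P x z := by
    rintro x y z (_ | hxy) (_ | hyz)
    exacts [.refl, .single hyz, .single hxy, .single (hP hxy hyz)]
  refine acyclicRel_of_le_strictOrder
    (s := fun x y => P x y ∨ ∃ a b, Relation.ReflGen P x a ∧ L a b ∧ Relation.ReflGen P b y)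
    ?_ ?_ ?_
  · rintro x y (h | h)
    exacts [Or.inl h, Or.inr ⟨x, y, .refl, h, .refl⟩]
  · rintro x y z (hxy | ⟨a, b, hxa, hab, hby⟩) (hyz | ⟨c, d, hyc, hcd, hdz⟩)
    · exact Or.inl (hP hxy hyz)
    · exact Or.inr ⟨c, d, hPP (.single hxy) hyc, hcd, hdz⟩
    · exact Or.inr ⟨a, b, hxa, hab, hPP hby (.single hyz)⟩
    · refine Or.inr ⟨a, d, hxa, ?_, hdz⟩
      rcases hPP hby hyc with _ | hbc
      exacts [hL hab hcd, hLPL hab hbc hcd]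
  · rintro x (hxx | ⟨a, b, hxa, hab, hbx⟩)
    · exact hPirr x hxx
    · rcases hPP hbx hxa with _ | hba
      exacts [hLirr _ hab, hLP hab hba]

namespace WellFormedExec

variable (X : WellFormedExec E Loc)

theorem poloc_trans {x y z : E} (hxy : X.poloc x y) (hyz : X.poloc y z) : X.poloc x z :=
  ⟨X.po_trans _ _ _ hxy.1 hyz.1, hxy.2.trans hyz.2⟩

theorem poloc_irrefl (x : E) : ¬ X.poloc x x := fun h => X.po_irrefl x h.1

theorem co_trichotomous {w₁ w₂ : E} (h₁ : w₁ ∈ X.W) (h₂ : w₂ ∈ X.W)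
    (h : X.addr w₁ = X.addr w₂) : X.co w₁ w₂ ∨ w₁ = w₂ ∨ X.co w₂ w₁ := by
  by_cases he : w₁ = w₂
  · exact Or.inr (Or.inl he)
  · exact (X.co_total w₁ w₂ h₁ h₂ he h).imp_right Or.inr

theorem irreflexiveRel_fr_comp_iff (T : E → E → Prop) :
    irreflexiveRel (rcomp X.fr T) ↔ ¬ ∃ w₁ w₂ r, X.co w₁ w₂ ∧ X.rf w₁ r ∧ T w₂ r := by
  refine not_congr ⟨?_, ?_⟩
  · rintro ⟨r, w₂, ⟨w₁, hrf, hco⟩, hT⟩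
    exact ⟨w₁, w₂, r, hco, hrf, hT⟩
  · rintro ⟨w₁, w₂, r, hco, hrf, hT⟩
    exact ⟨r, w₂, ⟨w₁, hrf, hco⟩, hT⟩

open Classical in
noncomputable def src (x : E) : E :=
  if h : x ∈ X.R then (X.rf_exists_unique x h).exists.choose else x

theorem rf_src {x : E} (hx : x ∈ X.R) : X.rf (X.src x) x := by
  rw [src, dif_pos hx]
  exact (X.rf_exists_unique x hx).exists.choose_spec

theorem src_eq_of_rf {w x : E} (h : X.rf w x) : X.src x = w :=
  have hx : x ∈ X.R := (X.rf_wf w x h).2.1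
  (X.rf_exists_unique x hx).unique (X.rf_src hx) h

theorem src_of_notMem_R {x : E} (hx : x ∉ X.R) : X.src x = x := dif_neg hx

theorem src_of_mem_W {x : E} (hx : x ∈ X.W) : X.src x = x :=
  X.src_of_notMem_R (Set.disjoint_left.mp X.WR_disjoint hx)

theorem addr_src (x : E) : X.addr (X.src x) = X.addr x := by
  by_cases hx : x ∈ X.R
  · exact (X.rf_wf _ _ (X.rf_src hx)).2.2
  · rw [X.src_of_notMem_R hx]

def cohLt (x y : E) : Prop := X.co (X.src x) (X.src y) ∨ X.rf x y

theorem cohLt_trans {x y z : E} (hxy : X.cohLt x y) (hyz : X.cohLt y z) : X.cohLt x z := by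
  rcases hxy with hxy | hxy <;> rcases hyz with hyz | hyz
  · exact Or.inl (X.co_trans _ _ _ hxy hyz)
  · left
    rwa [X.src_eq_of_rf hyz, ← X.src_of_mem_W (X.rf_wf _ _ hyz).1]
  · left
    rwa [X.src_of_mem_W (X.rf_wf _ _ hxy).1, ← X.src_eq_of_rf hxy]
  · exact absurd (X.rf_wf _ _ hyz).1 (Set.disjoint_right.mp X.WR_disjoint (X.rf_wf _ _ hxy).2.1)

theorem cohLt_irrefl (x : E) : ¬ X.cohLt x x := by
  rintro (h | h)
  · exact X.co_irrefl _ h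
  · exact Set.disjoint_left.mp X.WR_disjoint (X.rf_wf _ _ h).1 (X.rf_wf _ _ h).2.1

theorem src_mem_W_of_cohLt_left {x y : E} (h : X.cohLt x y) : X.src x ∈ X.W := by
  rcases h with h | h
  · exact (X.co_wf _ _ h).1
  · rw [X.src_of_mem_W (X.rf_wf _ _ h).1]
    exact (X.rf_wf _ _ h).1

theorem src_mem_W_of_cohLt_right {x y : E} (h : X.cohLt x y) : X.src y ∈ X.W := by
  rcases h with h | h
  · exact (X.co_wf _ _ h).2.1
  · rw [X.src_eq_of_rf h]
    exact (X.rf_wf _ _ h).1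

theorem cohLt_of_com {x y : E} (h : X.com x y) : X.cohLt x y := by
  rcases h with h | h | ⟨w, hwx, hwy⟩
  · left
    rwa [X.src_of_mem_W (X.co_wf _ _ h).1, X.src_of_mem_W (X.co_wf _ _ h).2.1]
  · exact Or.inr h
  · left
    rwa [X.src_eq_of_rf hwx, X.src_of_mem_W (X.co_wf _ _ hwy).2.1]

theorem not_co_src_of_poloc
    (hCoWR : ¬ ∃ w1 w2 r, X.co w1 w2 ∧ X.rf w1 r ∧ Relation.TransGen (cppHb X) w2 r)
    (hHBvsMO : irreflexiveRel (rcomp (Relation.TransGen (cppHb X)) X.co))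
    (hRW2 : ¬ ∃ a b c, X.poloc a b ∧ X.co b c ∧ X.rf c a)
    (hRR : ¬ ∃ a b c d, X.poloc b c ∧ X.rf a b ∧ X.rf d c ∧ X.co d a)
    {x y : E} (hxy : X.poloc x y) : ¬ X.co (X.src y) (X.src x) := by
  intro hco
  have hb : Relation.TransGen (cppHb X) x y := .single (Or.inl hxy.1)
  by_cases hx : x ∈ X.R <;> by_cases hy : y ∈ X.R
  · exact hRR ⟨_, x, y, _, hxy, X.rf_src hx, X.rf_src hy, hco⟩
  · rw [X.src_of_notMem_R hy] at hco
    exact hRW2 ⟨x, y, _, hxy, hco, X.rf_src hx⟩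
  · rw [X.src_of_notMem_R hx] at hco
    exact hCoWR ⟨_, x, y, hco, X.rf_src hy, hb⟩
  · rw [X.src_of_notMem_R hx, X.src_of_notMem_R hy] at hco
    exact hHBvsMO ⟨x, y, hb, hco⟩

theorem mem_R_of_poloc_of_src_eq (hRW1 : ¬ ∃ a b, X.poloc a b ∧ X.rf b a) {x y : E}
    (hxy : X.poloc x y) (he : X.src x = X.src y) : y ∈ X.R := by
  by_contra hy
  rw [X.src_of_notMem_R hy] at he
  by_cases hx : x ∈ X.R
  · exact hRW1 ⟨x, y, hxy, he ▸ X.rf_src hx⟩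
  · rw [X.src_of_notMem_R hx] at he
    exact (X.po_wf x y hxy.1).1 he

theorem cohLt_of_cohLt_of_poloc
    (hCoWR : ¬ ∃ w1 w2 r, X.co w1 w2 ∧ X.rf w1 r ∧ Relation.TransGen (cppHb X) w2 r)
    (hHBvsMO : irreflexiveRel (rcomp (Relation.TransGen (cppHb X)) X.co))
    (hRW1 : ¬ ∃ a b, X.poloc a b ∧ X.rf b a)
    (hRW2 : ¬ ∃ a b c, X.poloc a b ∧ X.co b c ∧ X.rf c a)
    (hRR : ¬ ∃ a b c d, X.poloc b c ∧ X.rf a b ∧ X.rf d c ∧ X.co d a)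
    {a b c : E} (hab : X.cohLt a b) (hbc : X.poloc b c) (hc : X.src c ∈ X.W) :
    X.cohLt a c := by
  have haddr : X.addr (X.src b) = X.addr (X.src c) := by rw [X.addr_src, X.addr_src, hbc.2]
  rcases X.co_trichotomous (X.src_mem_W_of_cohLt_right hab) hc haddr with hco | he | hco
  · exact X.cohLt_trans hab (Or.inl hco)
  · rcases hab with hab | hab
    · exact Or.inl (he ▸ hab)
    · rw [← X.src_eq_of_rf hab, he]
      exact Or.inr (X.rf_src (X.mem_R_of_poloc_of_src_eq hRW1 hbc he))
  · exact absurd hco (X.not_co_src_of_poloc hCoWR hHBvsMO hRW2 hRR hbc)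

theorem acyclic_poloc_com_of_cppRA
    (hCoWR : ¬ ∃ w1 w2 r, X.co w1 w2 ∧ X.rf w1 r ∧ Relation.TransGen (cppHb X) w2 r)
    (hHBvsMO : irreflexiveRel (rcomp (Relation.TransGen (cppHb X)) X.co))
    (hRW1 : ¬ ∃ a b, X.poloc a b ∧ X.rf b a)
    (hRW2 : ¬ ∃ a b c, X.poloc a b ∧ X.co b c ∧ X.rf c a)
    (hRR : ¬ ∃ a b c d, X.poloc b c ∧ X.rf a b ∧ X.rf d c ∧ X.co d a) :
    acyclicRel (fun x y => X.poloc x y ∨ X.com x y) := by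
  have absorb : ∀ {a b c}, X.cohLt a b → X.poloc b c → X.src c ∈ X.W → X.cohLt a c :=
    X.cohLt_of_cohLt_of_poloc hCoWR hHBvsMO hRW1 hRW2 hRR
  refine acyclicRel.mono (s := fun x y => X.poloc x y ∨ X.cohLt x y)
    (acyclicRel_or_of_absorb X.poloc_trans X.poloc_irrefl X.cohLt_trans X.cohLt_irrefl ?_ ?_)
    fun h => h.imp_right X.cohLt_of_com
  · exact fun hab hbc hcd => X.cohLt_trans (absorb hab hbc (X.src_mem_W_of_cohLt_left hcd)) hcd
  · exact fun hab hba => X.cohLt_irrefl _ (absorb hab hba (X.src_mem_W_of_cohLt_left hab))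

theorem not_coRW_coRR_of_acyclic_poloc_com
    (h : acyclicRel (fun x y => X.poloc x y ∨ X.com x y)) :
    ¬ (∃ a b, X.poloc a b ∧ X.rf b a) ∧
    ¬ (∃ a b c, X.poloc a b ∧ X.co b c ∧ X.rf c a) ∧
    ¬ (∃ a b c d, X.poloc b c ∧ X.rf a b ∧ X.rf d c ∧ X.co d a) := by
  refine ⟨?_, ?_, ?_⟩
  · rintro ⟨a, b, hab, hba⟩
    exact h.not_cycle₂ (Or.inl hab) (Or.inr (Or.inr (Or.inl hba)))
  · rintro ⟨a, b, c, hab, hbc, hca⟩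
    exact h.not_cycle₃ (Or.inl hab) (Or.inr (Or.inl hbc)) (Or.inr (Or.inr (Or.inl hca)))
  · rintro ⟨a, b, c, d, hbc, hab, hdc, hda⟩
    exact h.not_cycle₃ (Or.inr (Or.inr (Or.inl hab))) (Or.inl hbc)
      (Or.inr (Or.inr (Or.inr ⟨d, hdc, hda⟩)))

end WellFormedExec

/-- Equivalence of the adapted model (with weakened PROPAGATION) with C++ R-A. -/
theorem adapted_model_equiv_cpp_ra (X : WellFormedExec E Loc) :
    ((acyclicRel (fun x y => X.poloc x y ∨ X.com x y) ∧
      acyclicRel (cppHb X) ∧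
      irreflexiveRel (rcomp X.fr (Relation.TransGen (cppHb X))) ∧
      irreflexiveRel (rcomp (Relation.TransGen (cppHb X)) X.co))
     ↔ (acyclicRel (cppHb X) ∧
        (¬ ∃ w1 w2 r, X.co w1 w2 ∧ X.rf w1 r ∧ Relation.TransGen (cppHb X) w2 r) ∧
        irreflexiveRel (rcomp (Relation.TransGen (cppHb X)) X.co) ∧
        ¬ (∃ a b, X.poloc a b ∧ X.rf b a) ∧
        ¬ (∃ a b c, X.poloc a b ∧ X.co b c ∧ X.rf c a) ∧
        ¬ (∃ a b c d, X.poloc b c ∧ X.rf a b ∧ X.rf d c ∧ X.co d a))) ∧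
    (irreflexiveRel (rcomp (Relation.TransGen (cppHb X)) X.co) →
       ¬ (∃ a b, X.poloc a b ∧ X.co b a)) ∧
    ((¬ ∃ w1 w2 r, X.co w1 w2 ∧ X.rf w1 r ∧ Relation.TransGen (cppHb X) w2 r) →
       ¬ (∃ a b c, X.poloc a b ∧ X.rf c b ∧ X.co c a)) := by
  refine ⟨⟨?_, ?_⟩, ?_, ?_⟩
  · rintro ⟨hSC, hHb, hObs, hHBvsMO⟩
    exact ⟨hHb, (X.irreflexiveRel_fr_comp_iff _).1 hObs, hHBvsMO,
      X.not_coRW_coRR_of_acyclic_poloc_com hSC⟩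
  · rintro ⟨hHb, hCoWR, hHBvsMO, hRW1, hRW2, hRR⟩
    exact ⟨X.acyclic_poloc_com_of_cppRA hCoWR hHBvsMO hRW1 hRW2 hRR, hHb,
      (X.irreflexiveRel_fr_comp_iff _).2 hCoWR, hHBvsMO⟩
  · rintro hHBvsMO ⟨a, b, hab, hba⟩
    exact hHBvsMO ⟨a, b, .single (Or.inl hab.1), hba⟩
  · rintro hCoWR ⟨a, b, c, hab, hcb, hca⟩
    exact hCoWR ⟨c, a, b, hca, hcb, .single (Or.inl hab.1)⟩

end CppRA
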